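/- arXiv:2109.08769 — 3 statements merged into one kernel-verified Lean document; each statement's English description precedes it below -/
import Mathlib

section
/- Let n ≥ 1 and m ≥ 2 be integers, C > 0, and set α = n/(n(m−1)+2), β = α/n, k = (m−1)α/(2mn). Let 0 < t0 < t1. For t ∈ [t0, t1] define the rescaled parameter s(t) = (t^β − t0^β)/(t1^β − t0^β) and, for s ∈ [0,1], the dilation factor c(s) = 1 + ((t1/t0)^β − 1)·s. Then the displacement interpolant with rescaling equals the exact ZKB profile: for every t ∈ [t0, t1] and every x ∈ ℝⁿ, B(t0, x / c(s(t))) · c(s(t))^{-n} = B(t, x). -/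
open Real

/-- ZKB (Barenblatt) profile `B(t,x) = t^{-α} (max(C - k‖x‖² t^{-2β}, 0))^{1/(m-1)}` on `ℝⁿ`,
with exponents `α = n/(n(m-1)+2)`, `β = α/n`, `k = (m-1)α/(2mn)`. -/
noncomputable def zkb (n m : ℕ) (C : ℝ) (t : ℝ) (x : EuclideanSpace ℝ (Fin n)) : ℝ :=
  let α : ℝ := n / (n * (m - 1) + 2)
  let β : ℝ := α / n
  let k : ℝ := ((m : ℝ) - 1) * α / (2 * m * n)
  t ^ (-α) * (max (C - k * ‖x‖ ^ 2 * t ^ (-(2 * β))) 0) ^ (1 / ((m : ℝ) - 1))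

/-- with the rescaled parameter `s(t) = (t^β - t0^β)/(t1^β - t0^β)` and dilation
factor `c(s) = 1 + ((t1/t0)^β - 1)s`, the displacement interpolant of the ZKB profiles at times
`t0 < t1` coincides with the exact ZKB profile:
`B(t0, x / c(s(t))) c(s(t))^{-n} = B(t,x)` for all `t ∈ [t0,t1]`, `x ∈ ℝⁿ`. -/
theorem zkb_displacement_interpolation (n m : ℕ) (hn : 1 ≤ n) (hm : 2 ≤ m) (C : ℝ) (hC : 0 < C)
    (α β k : ℝ)
    (hα : α = n / (n * (m - 1) + 2)) (hβ : β = α / n) (hk : k = ((m : ℝ) - 1) * α / (2 * m * n))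
    (t0 t1 : ℝ) (ht0 : 0 < t0) (ht01 : t0 < t1)
    (s : ℝ → ℝ) (hs : ∀ t, s t = (t ^ β - t0 ^ β) / (t1 ^ β - t0 ^ β))
    (c : ℝ → ℝ) (hc : ∀ σ, c σ = 1 + ((t1 / t0) ^ β - 1) * σ) :
    ∀ t ∈ Set.Icc t0 t1, ∀ x : EuclideanSpace ℝ (Fin n),
      zkb n m C t0 ((c (s t))⁻¹ • x) * (c (s t)) ^ (-(n : ℤ)) = zkb n m C t x := by
  intro t ht x
  obtain ⟨ht0t, htt1⟩ := ht
  have ht1 : 0 < t1 := ht0.trans ht01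
  have htp : 0 < t := ht0.trans_le ht0t
  have hnpos : (0:ℝ) < n := by exact_mod_cast Nat.pos_of_ne_zero (by omega)
  have hm1 : (1:ℝ) ≤ (m:ℝ) - 1 := by
    have : (2:ℝ) ≤ m := by exact_mod_cast hm
    linarith
  have hden : (0:ℝ) < (n:ℝ) * ((m:ℝ) - 1) + 2 := by nlinarith
  have hαpos : 0 < α := by rw [hα]; positivity
  have hβpos : 0 < β := by rw [hβ]; positivity
  have hβn : β * n = α := by rw [hβ]; field_simp
  have h01 : t0 ^ β < t1 ^ β := Real.rpow_lt_rpow ht0.le ht01 hβpos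
  have hdivpos : 0 < t / t0 := div_pos htp ht0
  have hct : c (s t) = (t / t0) ^ β := by
    rw [hc, hs]
    have h1 : (t1 / t0) ^ β = t1 ^ β / t0 ^ β := Real.div_rpow ht1.le ht0.le β
    have h2 : (t / t0) ^ β = t ^ β / t0 ^ β := Real.div_rpow htp.le ht0.le β
    have h3 : t0 ^ β ≠ 0 := (Real.rpow_pos_of_pos ht0 β).ne'
    have h4 : t1 ^ β - t0 ^ β ≠ 0 := sub_ne_zero.mpr h01.ne'
    rw [h1, h2]; field_simp; ring
  set ct := c (s t) with hctdef
  have hctpos : 0 < ct := hct ▸ Real.rpow_pos_of_pos hdivpos β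
  have hnorm : ‖(ct⁻¹ : ℝ) • x‖ = ct⁻¹ * ‖x‖ := by
    rw [norm_smul, Real.norm_eq_abs, abs_of_pos (inv_pos.mpr hctpos)]
  have hz : ∀ z : ℝ, ((t / t0) ^ z) * t0 ^ z = t ^ z := fun z => by
    rw [Real.div_rpow htp.le ht0.le, div_mul_cancel₀]
    exact (Real.rpow_pos_of_pos ht0 z).ne'
  have hsq : (ct⁻¹) ^ 2 = (t / t0) ^ (-(2 * β)) := by
    rw [hct, ← Real.rpow_neg hdivpos.le, sq, ← Real.rpow_add hdivpos]
    congr 1; ring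
  have hkey1 : (ct⁻¹) ^ 2 * t0 ^ (-(2 * β)) = t ^ (-(2 * β)) := by
    rw [hsq, hz]
  have hpre : t0 ^ (-α) * ct ^ (-(n : ℤ)) = t ^ (-α) := by
    have hcast : ct ^ (-(n : ℤ)) = ct ^ (-(n : ℝ)) := by
      rw [← Real.rpow_intCast ct (-(n : ℤ))]; push_cast; ring_nf
    rw [hcast, hct, ← Real.rpow_mul hdivpos.le]
    have hβneg : β * (-(n:ℝ)) = -α := by rw [← hβn]; ring
    rw [hβneg, mul_comm, hz]
  simp only [zkb]
  rw [← hα, ← hβ, ← hk, hnorm, mul_pow]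
  have hmax : C - k * ((ct⁻¹) ^ 2 * ‖x‖ ^ 2) * t0 ^ (-(2 * β)) =
      C - k * ‖x‖ ^ 2 * t ^ (-(2 * β)) := by
    rw [← hkey1]; ring
  rw [hmax, ← hpre]; ring
end

section
/- Let n ≥ 1 and let Σ0, Σ1 be symmetric positive definite real n×n matrices. Let Σ0^{1/2} denote the unique symmetric positive definite square root of Σ0 and define A = Σ0^{−1/2} · (Σ0^{1/2} Σ1 Σ0^{1/2})^{1/2} · Σ0^{−1/2}. Then A is symmetric positive definite, A Σ0 A = Σ1, and det A = √(det Σ1 / det Σ0). -/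
open Matrix

/-! The Riccati equation `A Σ₀ A = Σ₁` is pure algebra: with `S = Σ₀^{1/2}` it reads
`(S⁻¹ M S⁻¹) S² (S⁻¹ M S⁻¹) = S⁻¹ M² S⁻¹ = Σ₁`. Positive definiteness passes from `Σ₀, Σ₁` to
their square roots and survives congruence by the symmetric invertible matrices `S` and `S⁻¹`.
Finally `det A` is positive and `(det A)² det Σ₀ = det Σ₁`, which pins it down. -/

namespace Matrix

variable {n : Type*} [Fintype n] [DecidableEq n]

open scoped ComplexOrder in
theorem PosSemidef.posDef_of_sq_eq {𝕜 : Type*} [RCLike 𝕜] {S T : Matrix n n 𝕜}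
    (hS : S.PosSemidef) (hT : T.PosDef) (hST : S ^ 2 = T) : S.PosDef := by
  rw [hS.posDef_iff_det_ne_zero]
  intro hdet
  have : T.det = 0 := by rw [← hST, det_pow, hdet, zero_pow two_ne_zero]
  exact hT.det_pos.ne' this

theorem PosDef.mul_mul_same_of_isHermitian {R : Type*} [CommRing R] [PartialOrder R] [StarRing R]
    {A S : Matrix n n R} (hA : A.PosDef) (hS : S.IsHermitian) (hSu : IsUnit S) :
    (S * A * S).PosDef := by
  simpa [star_eq_conjTranspose, hS.eq] using (IsUnit.posDef_star_left_conjugate_iff hSu).mpr hA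

theorem nonsing_inv_mul_mul_nonsing_inv_riccati {R : Type*} [CommRing R] {S M B : Matrix n n R}
    (hS : IsUnit S.det) (hM : M ^ 2 = S * B * S) :
    S⁻¹ * M * S⁻¹ * S ^ 2 * (S⁻¹ * M * S⁻¹) = B := by
  have hinv_mul : S⁻¹ * S = 1 := nonsing_inv_mul S hS
  have hmul_inv : S * S⁻¹ = 1 := mul_nonsing_inv S hS
  calc S⁻¹ * M * S⁻¹ * S ^ 2 * (S⁻¹ * M * S⁻¹)
      = S⁻¹ * (M * (S⁻¹ * S) * (S * S⁻¹) * M) * S⁻¹ := by simp only [pow_two, mul_assoc]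
    _ = S⁻¹ * M ^ 2 * S⁻¹ := by rw [hinv_mul, hmul_inv, mul_one, mul_one, ← pow_two]
    _ = (S⁻¹ * S) * B * (S * S⁻¹) := by simp only [hM, mul_assoc]
    _ = B := by rw [hinv_mul, hmul_inv, one_mul, mul_one]

theorem det_eq_sqrt_div_of_mul_mul_eq {A B C : Matrix n n ℝ} (hA : 0 ≤ A.det) (hB : B.det ≠ 0)
    (hABC : A * B * A = C) : A.det = √(C.det / B.det) := by
  have hsq : A.det ^ 2 = C.det / B.det := by
    rw [← hABC, det_mul, det_mul, eq_div_iff hB]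
    ring
  rw [← hsq, Real.sqrt_sq hA]

end Matrix

theorem gaussian_transport_matrix_properties_general
    (n : ℕ)
    (Sigma0 Sigma1 : Matrix (Fin n) (Fin n) ℝ) (hSigma0 : Sigma0.PosDef)
    (hSigma1 : Sigma1.PosDef)
    (S0 : Matrix (Fin n) (Fin n) ℝ) (hS0 : S0.PosSemidef) (hS0sq : S0 ^ 2 = Sigma0)
    (M : Matrix (Fin n) (Fin n) ℝ) (hM : M.PosSemidef) (hMsq : M ^ 2 = S0 * Sigma1 * S0)
    (A : Matrix (Fin n) (Fin n) ℝ) (hA : A = S0⁻¹ * M * S0⁻¹) :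
    A.PosDef ∧ A * Sigma0 * A = Sigma1 ∧ A.det = Real.sqrt (Sigma1.det / Sigma0.det) := by
  have hS0pd : S0.PosDef := hS0.posDef_of_sq_eq hSigma0 hS0sq
  have hS0u : IsUnit S0 := hS0pd.isUnit
  have hMpd : M.PosDef :=
    hM.posDef_of_sq_eq (hSigma1.mul_mul_same_of_isHermitian hS0.isHermitian hS0u) hMsq
  have hApd : A.PosDef := hA ▸ hMpd.mul_mul_same_of_isHermitian hS0.isHermitian.inv
    (isUnit_nonsing_inv_iff.mpr hS0u)
  have hriccati : A * Sigma0 * A = Sigma1 := by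
    rw [hA, ← hS0sq]
    exact nonsing_inv_mul_mul_nonsing_inv_riccati ((isUnit_iff_isUnit_det S0).mp hS0u) hMsq
  exact ⟨hApd, hriccati,
    det_eq_sqrt_div_of_mul_mul_eq hApd.det_pos.le hSigma0.det_pos.ne' hriccati⟩

/-- with covariances `Sigma0, Sigma1`, `S0 = Sigma0^{1/2}` the unique symmetric
positive semidefinite square root of `Sigma0`, `M = (Sigma0^{1/2} Sigma1 Sigma0^{1/2})^{1/2}`,
and `A = Sigma0^{-1/2} M Sigma0^{-1/2}`, the matrix `A` is symmetric positive definite,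
satisfies `A Sigma0 A = Sigma1`, and `det A = √(det Sigma1 / det Sigma0)`. -/
theorem gaussian_transport_matrix_properties
    (n : ℕ) (hn : 1 ≤ n)
    (Sigma0 Sigma1 : Matrix (Fin n) (Fin n) ℝ) (hSigma0 : Sigma0.PosDef)
    (hSigma1 : Sigma1.PosDef)
    (S0 : Matrix (Fin n) (Fin n) ℝ) (hS0 : S0.PosSemidef) (hS0sq : S0 ^ 2 = Sigma0)
    (M : Matrix (Fin n) (Fin n) ℝ) (hM : M.PosSemidef) (hMsq : M ^ 2 = S0 * Sigma1 * S0)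
    (A : Matrix (Fin n) (Fin n) ℝ) (hA : A = S0⁻¹ * M * S0⁻¹) :
    A.PosDef ∧ A * Sigma0 * A = Sigma1 ∧ A.det = Real.sqrt (Sigma1.det / Sigma0.det) :=
  gaussian_transport_matrix_properties_general n Sigma0 Sigma1 hSigma0 hSigma1 S0 hS0 hS0sq M hM
    hMsq A hA
end

section
/- Let n ≥ 1, let Σ0, Σ1 be symmetric positive definite real n×n matrices, and define A = Σ0^{−1/2}(Σ0^{1/2} Σ1 Σ0^{1/2})^{1/2} Σ0^{−1/2}. For s ∈ [0,1] set M_s = (1−s)·I + s·A and Σ_s = Σ0^{−1/2} ((1−s)Σ0 + s(Σ0^{1/2} Σ1 Σ0^{1/2})^{1/2})² Σ0^{−1/2}. Then for every s ∈ [0,1]: M_s is symmetric positive definite (in particular invertible, so the McCann interpolation map ξ ↦ (1−s)ξ + s·A ξ is the gradient of a convex function), and Σ_s = M_s Σ0 M_s; consequently Σ_s is symmetric positive definite. -/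
/-!
Conjugation `X ↦ Σ₀^{-1/2} X Σ₀^{-1/2}` is linear and sends `Σ₀` to `I` and
`(Σ₀^{1/2} Σ₁ Σ₀^{1/2})^{1/2}` to `A`, so it sends `Bₛ = (1-s)Σ₀ + s(Σ₀^{1/2} Σ₁ Σ₀^{1/2})^{1/2}`
to `Mₛ`; hence `Σₛ = Σ₀^{-1/2} Bₛ² Σ₀^{-1/2} = Mₛ Σ₀ Mₛ`. Positive definiteness follows because
the positive definite cone is stable under convex combinations and under congruence by positive
definite matrices, and a positive semidefinite matrix whose square is positive definite is
invertible, hence positive definite.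
-/

open Matrix
open scoped ComplexOrder

namespace Matrix

section PosDef

variable {n 𝕜 : Type*} [RCLike 𝕜]

lemma PosDef.smul_add_smul {A B : Matrix n n 𝕜} (hA : A.PosDef) (hB : B.PosDef) {a b : ℝ}
    (ha : 0 ≤ a) (hb : 0 ≤ b) (hab : 0 < a + b) : (a • A + b • B).PosDef := by
  rcases ha.eq_or_lt with rfl | ha
  · simpa using hB.smul (zero_add b ▸ hab)
  · exact (hA.smul ha).add_posSemidef (hB.posSemidef.smul hb)

variable [Fintype n] [DecidableEq n]

lemma PosSemidef.posDef_of_posDef_pow {A : Matrix n n 𝕜} (hA : A.PosSemidef) {k : ℕ}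
    (hk : k ≠ 0) (hAk : (A ^ k).PosDef) : A.PosDef :=
  hA.posDef_iff_isUnit.mpr ((isUnit_pow_iff hk).mp hAk.isUnit)

lemma PosDef.mul_mul_same {X U : Matrix n n 𝕜} (hX : X.PosDef) (hU : U.PosDef) :
    (U * X * U).PosDef := by
  simpa [star_eq_conjTranspose, hU.isHermitian.eq] using
    (IsUnit.posDef_star_left_conjugate_iff hU.isUnit).mpr hX

end PosDef

section Congruence

variable {n R : Type*} [Fintype n] [DecidableEq n] [CommRing R] {S : Matrix n n R}

lemma inv_mul_smul_sq_add_smul_mul_inv (hS : IsUnit S) (a b : R) (B : Matrix n n R) :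
    S⁻¹ * (a • S ^ 2 + b • B) * S⁻¹ = a • 1 + b • (S⁻¹ * B * S⁻¹) := by
  have hS' : IsUnit S.det := (isUnit_iff_isUnit_det S).mp hS
  simp only [Matrix.mul_add, Matrix.add_mul, Matrix.mul_smul, Matrix.smul_mul, sq,
    ← Matrix.mul_assoc, nonsing_inv_mul S hS', Matrix.one_mul, mul_nonsing_inv S hS']

lemma inv_mul_mul_inv_mul_sq_mul_inv_mul_mul_inv (hS : IsUnit S) (B : Matrix n n R) :
    S⁻¹ * B * S⁻¹ * S ^ 2 * (S⁻¹ * B * S⁻¹) = S⁻¹ * B ^ 2 * S⁻¹ := by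
  have hS' : IsUnit S.det := (isUnit_iff_isUnit_det S).mp hS
  simp only [sq, Matrix.mul_assoc, nonsing_inv_mul_cancel_left (h := hS'),
    mul_nonsing_inv_cancel_left (h := hS')]

end Congruence

end Matrix

theorem gaussian_mccann_covariance_general
    (n : ℕ)
    (Sigma0 Sigma1 : Matrix (Fin n) (Fin n) ℝ) (hSigma0 : Sigma0.PosDef)
    (hSigma1 : Sigma1.PosDef)
    (S0 : Matrix (Fin n) (Fin n) ℝ) (hS0 : S0.PosSemidef) (hS0sq : S0 ^ 2 = Sigma0)
    (M : Matrix (Fin n) (Fin n) ℝ) (hM : M.PosSemidef) (hMsq : M ^ 2 = S0 * Sigma1 * S0)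
    (A : Matrix (Fin n) (Fin n) ℝ) (hA : A = S0⁻¹ * M * S0⁻¹)
    (Ms Sigmas : ℝ → Matrix (Fin n) (Fin n) ℝ)
    (hMs : ∀ s, Ms s = (1 - s) • (1 : Matrix (Fin n) (Fin n) ℝ) + s • A)
    (hSigmas : ∀ s, Sigmas s = S0⁻¹ * ((1 - s) • Sigma0 + s • M) ^ 2 * S0⁻¹) :
    ∀ s ∈ Set.Icc (0:ℝ) 1,
      (Ms s).PosDef ∧ Sigmas s = Ms s * Sigma0 * Ms s ∧ (Sigmas s).PosDef := by
  rintro s ⟨hs0, hs1⟩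
  have hS0pd : S0.PosDef := hS0.posDef_of_posDef_pow two_ne_zero (hS0sq ▸ hSigma0)
  have hMpd : M.PosDef := hM.posDef_of_posDef_pow two_ne_zero (hMsq ▸ hSigma1.mul_mul_same hS0pd)
  have hApd : A.PosDef := hA ▸ hMpd.mul_mul_same hS0pd.inv
  have hMs_pd : (Ms s).PosDef :=
    hMs s ▸ PosDef.one.smul_add_smul hApd (by linarith) hs0 (by linarith)
  have hMs_conj : Ms s = S0⁻¹ * ((1 - s) • Sigma0 + s • M) * S0⁻¹ := by
    rw [hMs s, hA, ← hS0sq, inv_mul_smul_sq_add_smul_mul_inv hS0pd.isUnit]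
  have hSigmas_eq : Sigmas s = Ms s * Sigma0 * Ms s := by
    rw [hSigmas s, hMs_conj, ← hS0sq, inv_mul_mul_inv_mul_sq_mul_inv_mul_mul_inv hS0pd.isUnit]
  exact ⟨hMs_pd, hSigmas_eq, hSigmas_eq ▸ hSigma0.mul_mul_same hMs_pd⟩

/-- with `A = Sigma0^{-1/2}(Sigma0^{1/2} Sigma1 Sigma0^{1/2})^{1/2} Sigma0^{-1/2}`
(square roots characterized as the unique symmetric positive semidefinite square roots), for
every `s ∈ [0,1]` the McCann matrix `Mₛ = (1-s)I + sA` is symmetric positive definite (in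
particular invertible, so the McCann interpolation map `ξ ↦ (1-s)ξ + sAξ` is the gradient of a
convex function) and the interpolated covariance
`Σₛ = Sigma0^{-1/2}((1-s)Sigma0 + s(Sigma0^{1/2} Sigma1 Sigma0^{1/2})^{1/2})² Sigma0^{-1/2}`
satisfies `Σₛ = Mₛ Sigma0 Mₛ`; consequently `Σₛ` is symmetric positive definite. -/
theorem gaussian_mccann_covariance
    (n : ℕ) (hn : 1 ≤ n)
    (Sigma0 Sigma1 : Matrix (Fin n) (Fin n) ℝ) (hSigma0 : Sigma0.PosDef)
    (hSigma1 : Sigma1.PosDef)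
    (S0 : Matrix (Fin n) (Fin n) ℝ) (hS0 : S0.PosSemidef) (hS0sq : S0 ^ 2 = Sigma0)
    (M : Matrix (Fin n) (Fin n) ℝ) (hM : M.PosSemidef) (hMsq : M ^ 2 = S0 * Sigma1 * S0)
    (A : Matrix (Fin n) (Fin n) ℝ) (hA : A = S0⁻¹ * M * S0⁻¹)
    (Ms Sigmas : ℝ → Matrix (Fin n) (Fin n) ℝ)
    (hMs : ∀ s, Ms s = (1 - s) • (1 : Matrix (Fin n) (Fin n) ℝ) + s • A)
    (hSigmas : ∀ s, Sigmas s = S0⁻¹ * ((1 - s) • Sigma0 + s • M) ^ 2 * S0⁻¹) :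
    ∀ s ∈ Set.Icc (0:ℝ) 1,
      (Ms s).PosDef ∧ Sigmas s = Ms s * Sigma0 * Ms s ∧ (Sigmas s).PosDef :=
  gaussian_mccann_covariance_general n Sigma0 Sigma1 hSigma0 hSigma1 S0 hS0 hS0sq M hM hMsq A hA Ms
    Sigmas hMs hSigmas
end
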